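/- Let U be a universal operator on a separable infinite-dimensional complex Hilbert space H and let K = H ⊕ H. Define V ∈ L(K) by V(x,y) = (Ux + y, 0), and for each n ∈ ℕ define V_n ∈ L(K) by V_n(x,y) = (Ux + y, (1/n)x). Then V is universal on K, ‖V_n − V‖ = 1/n for every n, and each V_n is injective and therefore not universal. Consequently, the set of universal operators on K is not open in the operator-norm topology of L(K). -/

import Mathlib

/-!
`V` acts as `U` on the closed invariant subspace `H ⊕ 0`, and `H ⊕ H` is isomorphic to `H`
(both are isometric to `ℓ²(ℕ)`, being separable and infinite-dimensional). So every operator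
on `H ⊕ H` can be transported to `H`, realised by `U` on a closed invariant subspace, and that
subspace pushed into `H ⊕ 0`: `V` is universal. The perturbations `V_n` differ from `V` only in
the second coordinate `x / n`, which makes them injective, hence not universal, while
`V_n → V`.
-/
noncomputable section

/-- Universal operator on a complex Hilbert space. -/
def IsUniversal {H : Type*} [NormedAddCommGroup H] [InnerProductSpace ℂ H]
    (U : H →L[ℂ] H) : Prop :=
  ∀ T : H →L[ℂ] H, ∃ M : Submodule ℂ H, IsClosed (M : Set H) ∧ (∀ x ∈ M, U x ∈ M) ∧
    ∃ c : ℂ, c ≠ 0 ∧ ∃ J : H ≃L[ℂ] M, ∀ x : H, U (J x : H) = c • ((J (T x) : H))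

/-- The element `(x, y)` of the Hilbert-space direct sum `H ⊕ H`. -/
def mkPair {H : Type*} [NormedAddCommGroup H] [InnerProductSpace ℂ H] (x y : H) :
    WithLp 2 (H × H) :=
  (WithLp.equiv 2 (H × H)).symm (x, y)

open Function Filter Topology
open scoped lp

section HilbertBasis

variable {𝕜 E ι : Type*} [RCLike 𝕜] [NormedAddCommGroup E] [InnerProductSpace 𝕜 E]

theorem Orthonormal.norm_sub_sq_eq_two {v : ι → E} (hv : Orthonormal 𝕜 v) {i j : ι}
    (hij : i ≠ j) : ‖v i - v j‖ ^ 2 = 2 := by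
  rw [@norm_sub_sq 𝕜, hv.inner_eq_zero hij, hv.norm_eq_one, hv.norm_eq_one]
  norm_num

-- The vectors of a Hilbert basis are `√2` apart, so the balls of radius `1/2` around them are
-- disjoint open sets.
theorem HilbertBasis.countable_index [TopologicalSpace.SeparableSpace E]
    (b : HilbertBasis ι 𝕜 E) : Countable ι := by
  refine Pairwise.countable_of_isOpen_disjoint (s := fun i => Metric.ball (b i) (1 / 2))
    (fun i j hij => Metric.ball_disjoint_ball ?_) (fun _ => Metric.isOpen_ball)
    (fun i => ⟨b i, Metric.mem_ball_self (by norm_num)⟩)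
  have h := b.orthonormal.norm_sub_sq_eq_two hij
  rw [dist_eq_norm]
  nlinarith [norm_nonneg (b i - b j)]

theorem HilbertBasis.infinite_index (hE : ¬ FiniteDimensional 𝕜 E) (b : HilbertBasis ι 𝕜 E) :
    Infinite ι := by
  by_contra hfin
  have : Fintype ι := @Fintype.ofFinite ι (not_infinite_iff_finite.mp hfin)
  exact hE b.toOrthonormalBasis.toBasis.finiteDimensional_of_finite

theorem exists_linearIsometryEquiv_ell2 [CompleteSpace E] [TopologicalSpace.SeparableSpace E]
    (hE : ¬ FiniteDimensional 𝕜 E) : Nonempty (E ≃ₗᵢ[𝕜] ℓ²(ℕ, 𝕜)) := by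
  obtain ⟨w, b, -⟩ := exists_hilbertBasis 𝕜 E
  have := b.countable_index
  have := b.infinite_index hE
  obtain ⟨_⟩ := nonempty_denumerable w
  let e : ℕ ≃ w := (Denumerable.eqv w).symm
  have hdense : ⊤ ≤ (Submodule.span 𝕜 (Set.range (b ∘ e))).topologicalClosure := by
    rw [e.surjective.range_comp, b.dense_span]
  exact ⟨(HilbertBasis.mk (b.orthonormal.comp e e.injective) hdense).repr⟩

end HilbertBasis

section Universal

variable {H K : Type*} [NormedAddCommGroup H] [InnerProductSpace ℂ H]
  [NormedAddCommGroup K] [InnerProductSpace ℂ K]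

-- Universality for `T = 0` gives `W ∘ J = 0` with `J` injective.
theorem not_isUniversal_of_injective [Nontrivial H] {W : H →L[ℂ] H} (hW : Injective W) :
    ¬ IsUniversal W := by
  rintro hW'
  obtain ⟨M, -, -, c, -, J, hJ⟩ := hW' 0
  obtain ⟨x, hx⟩ := exists_ne (0 : H)
  have hJx : (J x : H) = J 0 := hW (by simp [hJ])
  exact hx (J.injective (Subtype.ext hJx))

theorem IsUniversal.of_isometry_intertwining [CompleteSpace H] {U : H →L[ℂ] H}
    (hU : IsUniversal U) (φ : K ≃L[ℂ] H) {V : K →L[ℂ] K} (i : H →ₗᵢ[ℂ] K)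
    (hi : ∀ x, V (i x) = i (U x)) : IsUniversal V := by
  intro T
  obtain ⟨M, hM, hUM, c, hc, J, hJ⟩ := hU (φ.toContinuousLinearMap ∘L T ∘L φ.symm)
  let iM : M ≃ₗᵢ[ℂ] M.map i.toLinearMap :=
    LinearIsometryEquiv.ofSurjective (i.submoduleMap M) <| by
      rintro ⟨_, m, hm, rfl⟩
      exact ⟨⟨m, hm⟩, rfl⟩
  refine ⟨M.map i.toLinearMap, ?_, ?_, c, hc, φ.trans (J.trans iM.toContinuousLinearEquiv), ?_⟩
  · rw [Submodule.map_coe]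
    exact i.isometry.isClosedEmbedding.isClosedMap _ hM
  · rintro _ ⟨m, hm, rfl⟩
    exact ⟨U m, hUM m hm, (hi m).symm⟩
  · intro z
    have hiM : ∀ m, (iM m : K) = i m := fun _ => rfl
    simp only [ContinuousLinearEquiv.trans_apply, LinearIsometryEquiv.coe_toContinuousLinearEquiv,
      hiM, hi, hJ, map_smul]
    simp

end Universal

section DirectSum

variable {H : Type*} [NormedAddCommGroup H] [InnerProductSpace ℂ H]

@[simp] theorem mkPair_fst (x y : H) : (mkPair x y).fst = x := rfl

@[simp] theorem mkPair_snd (x y : H) : (mkPair x y).snd = y := rfl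

theorem mkPair_fst_snd (z : WithLp 2 (H × H)) : mkPair z.fst z.snd = z := rfl

theorem mkPair_sub_mkPair (x y x' y' : H) : mkPair x y - mkPair x' y' = mkPair (x - x') (y - y') :=
  rfl

theorem norm_mkPair_zero_left (y : H) : ‖mkPair 0 y‖ = ‖y‖ := WithLp.norm_toLp_snd 2 H H y

def inlIsometry : H →ₗᵢ[ℂ] WithLp 2 (H × H) where
  toFun x := mkPair x 0
  map_add' x y := by simp [mkPair, ← WithLp.toLp_add]
  map_smul' c x := by simp [mkPair, ← WithLp.toLp_smul]
  norm_map' := WithLp.norm_toLp_fst 2 H H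

theorem inlIsometry_apply (x : H) : inlIsometry x = mkPair x 0 := rfl

theorem injective_of_apply_mkPair {W : WithLp 2 (H × H) →L[ℂ] WithLp 2 (H × H)}
    (A : H →L[ℂ] H) {a : ℂ} (ha : a ≠ 0) (hW : ∀ x y, W (mkPair x y) = mkPair (A x + y) (a • x)) :
    Injective W := by
  refine (injective_iff_map_eq_zero W).mpr fun z hz => ?_
  rw [← mkPair_fst_snd z, hW] at hz
  have hx : z.fst = 0 := (smul_eq_zero.mp (congrArg WithLp.snd hz)).resolve_left ha
  have hy : z.snd = 0 := by simpa [hx] using congrArg WithLp.fst hz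
  rw [← mkPair_fst_snd z, hx, hy]
  rfl

theorem norm_eq_of_apply_mkPair [Nontrivial H] {D : WithLp 2 (H × H) →L[ℂ] WithLp 2 (H × H)}
    {a : ℂ} (hD : ∀ x y, D (mkPair x y) = mkPair 0 (a • x)) : ‖D‖ = ‖a‖ := by
  have hDz : ∀ z : WithLp 2 (H × H), ‖D z‖ = ‖a‖ * ‖z.fst‖ := fun z => by
    rw [← mkPair_fst_snd z, hD, norm_mkPair_zero_left, norm_smul]
    rfl
  refine le_antisymm (D.opNorm_le_bound (norm_nonneg a) fun z => ?_) ?_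
  · rw [hDz]
    gcongr
    exact WithLp.norm_fst_le _ z
  · obtain ⟨x, hx⟩ := exists_ne (0 : H)
    have h := D.le_opNorm (inlIsometry x)
    rw [hDz, LinearIsometry.norm_map] at h
    exact le_of_mul_le_mul_right h (norm_pos_iff.mpr hx)

end DirectSum

/-- Let `U` be universal on `H` and, on `K = H ⊕ H`, let `V (x,y) = (U x + y, 0)` and
`V_n (x,y) = (U x + y, (1/n) x)`. Then `V` is universal, `‖V_n - V‖ = 1/n`, each `V_n` is
injective, hence not universal; consequently the set of universal operators on `K` is not
open in the operator norm. -/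
theorem universal_not_open {H : Type*} [NormedAddCommGroup H]
    [InnerProductSpace ℂ H] [CompleteSpace H] [TopologicalSpace.SeparableSpace H]
    (hinf : ¬ FiniteDimensional ℂ H)
    (U : H →L[ℂ] H) (hU : IsUniversal U)
    (V : WithLp 2 (H × H) →L[ℂ] WithLp 2 (H × H))
    (Vn : ℕ → (WithLp 2 (H × H) →L[ℂ] WithLp 2 (H × H)))
    (hV : ∀ x y : H, V (mkPair x y) = mkPair (U x + y) 0)
    (hVn : ∀ n : ℕ, ∀ x y : H, Vn n (mkPair x y) = mkPair (U x + y) (((n : ℂ))⁻¹ • x)) :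
    IsUniversal V ∧
    (∀ n : ℕ, 0 < n →
      ‖Vn n - V‖ = 1 / (n : ℝ) ∧ Function.Injective (Vn n) ∧ ¬ IsUniversal (Vn n)) ∧
    ¬ IsOpen {W : WithLp 2 (H × H) →L[ℂ] WithLp 2 (H × H) | IsUniversal W} := by
  have : Nontrivial H := by
    contrapose! hinf
    infer_instance
  have hinfK : ¬ FiniteDimensional ℂ (WithLp 2 (H × H)) := fun h =>
    hinf (FiniteDimensional.of_injective inlIsometry.toLinearMap inlIsometry.injective)
  obtain ⟨eH⟩ := exists_linearIsometryEquiv_ell2 hinf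
  obtain ⟨eK⟩ := exists_linearIsometryEquiv_ell2 hinfK
  have hVU : IsUniversal V := hU.of_isometry_intertwining
    (eK.trans eH.symm).toContinuousLinearEquiv inlIsometry fun x => by simp [inlIsometry_apply, hV]
  have hVn_sub : ∀ n x y, (Vn n - V) (mkPair x y) = mkPair 0 (((n : ℂ))⁻¹ • x) := fun n x y => by
    rw [sub_apply, hVn, hV, mkPair_sub_mkPair, sub_self, sub_zero]
  have hnorm : ∀ n : ℕ, ‖Vn n - V‖ = 1 / (n : ℝ) := fun n => by
    rw [norm_eq_of_apply_mkPair (hVn_sub n), norm_inv, Complex.norm_natCast, one_div]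
  have hinj : ∀ n : ℕ, 0 < n → Injective (Vn n) := fun n hn =>
    injective_of_apply_mkPair U (inv_ne_zero (Nat.cast_ne_zero.mpr hn.ne')) (hVn n)
  refine ⟨hVU, fun n hn => ⟨hnorm n, hinj n hn, not_isUniversal_of_injective (hinj n hn)⟩,
    fun hopen => ?_⟩
  have hlim : Tendsto Vn atTop (𝓝 V) := by
    rw [tendsto_iff_norm_sub_tendsto_zero]
    simpa only [hnorm] using tendsto_one_div_atTop_nhds_zero_nat
  obtain ⟨n, hnV, hn⟩ :=
    ((hlim.eventually (hopen.mem_nhds hVU)).and (eventually_gt_atTop 0)).exists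
  exact not_isUniversal_of_injective (hinj n hn) hnV

end
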